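/- Let f ∈ L²(ℝ) and let g ∈ S(f), the closed linear span of {T_j f : j ∈ ℤ}. Then there exists a ℤ-periodic measurable function m such that ĝ = m·f̂ almost everywhere. -/

import Mathlib

/-!
The Fourier transform turns the translate `T_j f` into `e^{-2πijω} f̂(ω)`, a `ℤ`-periodic multiple
of `f̂`, so it maps the span of the integer translates of `f` into the space of periodic
multiples of `f̂`. That space is closed in `L²`: if `mₙ f̂ → u` in `L²`, then along a subsequence
`mₙ(ω) f̂(ω) → u(ω)` almost everywhere, so `mₙ(ω) → u(ω) / f̂(ω)` wherever `f̂(ω) ≠ 0`, and the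
pointwise `limUnder` of the `mₙ` is again measurable and periodic.
-/

open MeasureTheory FourierTransform Filter Topology
open scoped ENNReal

noncomputable section

/-- The space `L²(ℝ)` of complex-valued square-integrable functions. -/
abbrev L2 := Lp ℂ 2 (volume : Measure ℝ)

/-- The translation operator `T_a f (x) = f (x - a)` on `L²(ℝ)`. -/
def Tr (a : ℝ) : L2 → L2 :=
  Lp.compMeasurePreserving (fun x => x - a) (measurePreserving_sub_right volume a)

/-- `F` is the Fourier–Plancherel transform on `L²(ℝ)`: a unitary that agrees with the
classical Fourier integral `f̂(ω) = ∫ f(x) e^{-2πiωx} dx` on integrable functions. -/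
def IsFourierTransform (F : L2 ≃ₗᵢ[ℂ] L2) : Prop :=
  ∀ f : L2, Integrable (f : ℝ → ℂ) volume → (F f : ℝ → ℂ) =ᵐ[volume] 𝓕 (f : ℝ → ℂ)

/-- The shift-invariant space generated by `f`: the closed span of integer translates. -/
def SIS (f : L2) : Set L2 :=
  closure (Submodule.span ℂ {g : L2 | ∃ j : ℤ, g = Tr (j : ℝ) f} : Set L2)

theorem eq_limUnder_mul_of_tendsto_mul {ι 𝕜 : Type*} [NormedField 𝕜] {l : Filter ι} [l.NeBot]
    {s : ι → 𝕜} {a b : 𝕜} (h : Tendsto (fun n => s n * a) l (𝓝 b)) :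
    b = limUnder l s * a := by
  by_cases ha : a = 0
  · subst ha
    simp only [mul_zero] at h ⊢
    exact tendsto_nhds_unique h tendsto_const_nhds
  · have hs : Tendsto s l (𝓝 (b / a)) := by
      simpa [mul_div_assoc, div_self ha] using h.div_const a
    rw [hs.limUnder_eq, div_mul_cancel₀ b ha]

section InvariantMultiples

variable {α ι : Type*} [MeasurableSpace α] (μ : Measure α) (p : ℝ≥0∞)

def invariantMultiples (τ : ι → α → α) (φ : α → ℂ) : Submodule ℂ (Lp ℂ p μ) where
  carrier := {u | ∃ m : α → ℂ, Measurable m ∧ (∀ x i, m (τ i x) = m x) ∧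
    u =ᵐ[μ] fun x => m x * φ x}
  zero_mem' := ⟨0, measurable_const, fun _ _ => rfl, by
    filter_upwards [Lp.coeFn_zero ℂ p μ] with x hx
    rw [hx]
    exact (zero_mul _).symm⟩
  add_mem' := by
    rintro u v ⟨m, hm, hm_inv, hu⟩ ⟨n, hn, hn_inv, hv⟩
    refine ⟨m + n, hm.add hn, fun x i => by simp [hm_inv, hn_inv], ?_⟩
    filter_upwards [Lp.coeFn_add u v, hu, hv] with x hx hux hvx
    rw [hx, Pi.add_apply, hux, hvx, Pi.add_apply, add_mul]
  smul_mem' := by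
    rintro c u ⟨m, hm, hm_inv, hu⟩
    refine ⟨c • m, hm.const_smul c, fun x i => by simp [hm_inv], ?_⟩
    filter_upwards [Lp.coeFn_smul c u, hu] with x hx hux
    rw [hx, Pi.smul_apply, hux, Pi.smul_apply, smul_eq_mul, smul_eq_mul, mul_assoc]

variable {μ p} in
theorem isClosed_invariantMultiples [Fact (1 ≤ p)] (τ : ι → α → α) (φ : α → ℂ) :
    IsClosed (invariantMultiples μ p τ φ : Set (Lp ℂ p μ)) := by
  refine IsSeqClosed.isClosed fun u v hu huv => ?_
  choose m hm hm_inv hum using hu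
  obtain ⟨ns, -, hns⟩ := (tendstoInMeasure_of_tendsto_Lp huv).exists_seq_tendsto_ae
  refine ⟨fun x => limUnder atTop fun k => m (ns k) x,
    (StronglyMeasurable.limUnder fun k => (hm (ns k)).stronglyMeasurable).measurable,
    fun x i => by simp only [hm_inv], ?_⟩
  filter_upwards [hns, ae_all_iff.2 fun k => hum (ns k)] with x hx hmx
  exact eq_limUnder_mul_of_tendsto_mul (hx.congr hmx)

end InvariantMultiples

theorem MeasureTheory.Lp.continuous_smul_right {α 𝕜 E : Type*} [MeasurableSpace α]
    {μ : Measure α} {p q r : ℝ≥0∞} [ENNReal.HolderTriple p q r] [Fact (1 ≤ q)] [Fact (1 ≤ r)]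
    [NormedRing 𝕜] [NormedAddCommGroup E] [Module 𝕜 E] [IsBoundedSMul 𝕜 E] (f : Lp 𝕜 p μ) :
    Continuous fun g : Lp E q μ => (f • g : Lp E r μ) :=
  AddMonoidHomClass.continuous_of_bound
    (AddMonoidHom.mk' (fun g : Lp E q μ => (f • g : Lp E r μ)) (Lp.add_smul f)) ‖f‖
    (Lp.norm_smul_le f)

theorem MeasureTheory.Lp.dense_setOf_integrable {E F : Type*} [NormedAddCommGroup E]
    [NormedSpace ℝ E] [FiniteDimensional ℝ E] [MeasurableSpace E] [BorelSpace E]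
    [NormedAddCommGroup F] [NormedSpace ℝ F] {p : ℝ≥0∞} [Fact (1 ≤ p)] (hp : p ≠ ∞)
    {μ : Measure E} [μ.HasTemperateGrowth] [IsFiniteMeasureOnCompacts μ] :
    Dense {f : Lp F p μ | Integrable f μ} := by
  refine (SchwartzMap.denseRange_toLpCLM (F := F) hp).mono ?_
  rintro _ ⟨φ, rfl⟩
  exact φ.integrable.congr (φ.coeFn_toLp p μ).symm

namespace Real

theorem fourier_comp_sub_right {E : Type*} [NormedAddCommGroup E] [NormedSpace ℂ E]
    (h : ℝ → E) (a : ℝ) : 𝓕 (fun x => h (x - a)) = fun w => 𝐞 (-(a * w)) • 𝓕 h w := by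
  ext w
  have := congrFun (VectorFourier.fourierIntegral_comp_add_right 𝐞 volume (innerₗ ℝ) h (-a)) w
  rwa [innerₗ_apply_apply, Real.inner_apply, neg_mul] at this

theorem fourierChar_intCast (n : ℤ) : 𝐞 n = 1 := by
  rw [fourierChar_apply', Circle.exp_two_pi_mul_int]

theorem fourierChar_neg_intCast_mul_add_intCast (j k : ℤ) (ω : ℝ) :
    𝐞 (-(j * (ω + k))) = 𝐞 (-(j * ω)) := by
  have : -((j : ℝ) * (ω + k)) = -(j * ω) + ((-(j * k) : ℤ) : ℝ) := by push_cast; ring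
  rw [this, AddChar.map_add_eq_mul, fourierChar_intCast, mul_one]

def fourierPhase (a : ℝ) : Lp ℂ ∞ (volume : Measure ℝ) :=
  (memLp_top_of_bound
    (by fun_prop : Continuous fun ω : ℝ => (𝐞 (-(a * ω)) : ℂ)).aestronglyMeasurable 1
    (ae_of_all _ fun _ => (Circle.norm_coe _).le)).toLp _

theorem coeFn_fourierPhase (a : ℝ) :
    fourierPhase a =ᵐ[volume] fun ω => (𝐞 (-(a * ω)) : ℂ) :=
  MemLp.coeFn_toLp _

end Real

open Real

theorem IsFourierTransform.map_tr {F : L2 ≃ₗᵢ[ℂ] L2} (hF : IsFourierTransform F) (a : ℝ)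
    (h : L2) : F (Tr a h) = fourierPhase a • F h := by
  have hTr : Continuous fun h => F (Tr a h) :=
    F.continuous.comp (Lp.isometry_compMeasurePreserving _).continuous
  have hMod : Continuous fun h => (fourierPhase a • F h : L2) :=
    (Lp.continuous_smul_right _).comp F.continuous
  refine congrFun (hTr.ext_on (Lp.dense_setOf_integrable (by norm_num)) hMod ?_) h
  intro u (hu : Integrable u)
  have hTr_eq : (Tr a u : ℝ → ℂ) =ᵐ[volume] fun x => u (x - a) :=
    Lp.coeFn_compMeasurePreserving u (measurePreserving_sub_right volume a)
  refine Lp.ext ?_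
  calc (F (Tr a u) : ℝ → ℂ)
      =ᵐ[volume] 𝓕 (Tr a u : ℝ → ℂ) := hF _ ((hu.comp_sub_right a).congr hTr_eq.symm)
    _ = fun w => 𝐞 (-(a * w)) • 𝓕 (u : ℝ → ℂ) w := by
      rw [funext (fourier_congr_ae hTr_eq), fourier_comp_sub_right]
    _ =ᵐ[volume] ⇑(fourierPhase a) • ⇑(F u) := by
      filter_upwards [hF u hu, coeFn_fourierPhase a] with w hw hφ
      simp [Circle.smul_def, hw, hφ]
    _ =ᵐ[volume] (fourierPhase a • F u : L2) := (Lp.coeFn_lpSMul _ _).symm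

theorem stmt5 (F : L2 ≃ₗᵢ[ℂ] L2) (hF : IsFourierTransform F)
    (f g : L2) (hg : g ∈ SIS f) :
    ∃ m : ℝ → ℂ, Measurable m ∧ (∀ ω : ℝ, ∀ k : ℤ, m (ω + k) = m ω) ∧
      (F g : ℝ → ℂ) =ᵐ[volume] fun ω => m ω * (F f : ℝ → ℂ) ω := by
  let V := invariantMultiples volume 2 (fun (k : ℤ) (ω : ℝ) => ω + k) (F f)
  have htranslates :
      Submodule.span ℂ {g : L2 | ∃ j : ℤ, g = Tr (j : ℝ) f} ≤ V.comap (F : L2 →ₗ[ℂ] L2) := by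
    rw [Submodule.span_le]
    rintro _ ⟨j, rfl⟩
    change F (Tr j f) ∈ V
    rw [hF.map_tr]
    refine ⟨fun ω => 𝐞 (-(j * ω)), by fun_prop,
      fun ω k => by simp only [fourierChar_neg_intCast_mul_add_intCast], ?_⟩
    filter_upwards [Lp.coeFn_lpSMul (r := 2) (fourierPhase j) (F f), coeFn_fourierPhase j]
      with ω hω hφ
    simp [hω, hφ]
  exact (isClosed_invariantMultiples _ _).closure_subset
    (map_mem_closure F.continuous hg fun _ hx => htranslates hx)
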